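/- arXiv:2204.03377 — 2 statements merged into one kernel-verified Lean document; each statement's English description precedes it below -/
import Mathlib

section
/- Let S be a semigroup with finite R-height and let A be a right ideal of S. Then H_R(A) ≤ 2·H_R(S) − 1. -/
/-!
Common definitions: Green's preorder/relation computed inside a subsemigroup,
chains of R-classes, R-height, bi-ideals, one- and two-sided ideals,
the kernel, and completely simple (sub)semigroups.
-/

variable {S : Type*}

/-- Green's preorder `≤_B` computed with multipliers from `B`:
`a ≤_B b` iff `a ∈ bB¹`, i.e. `a = b` or `a = b*s` for some `s ∈ B`. -/
def RLe [Semigroup S] (B : Set S) (a b : S) : Prop :=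
  a = b ∨ ∃ s ∈ B, a = b * s

/-- The strict version `<_B` of Green's preorder. -/
def RLt [Semigroup S] (B : Set S) (a b : S) : Prop :=
  RLe B a b ∧ ¬ RLe B b a

/-- Green's relation `R` computed with multipliers from `B`. -/
def REquiv [Semigroup S] (B : Set S) (a b : S) : Prop :=
  RLe B a b ∧ RLe B b a

/-- There is a chain of `n` (distinct, linearly ordered) `R`-classes of the
subsemigroup `B`, with all representatives lying in `C`. -/
def HasRChain [Semigroup S] (B C : Set S) (n : ℕ) : Prop :=
  ∃ f : Fin n → S, (∀ i, f i ∈ C) ∧ ∀ i j : Fin n, i < j → RLt B (f i) (f j)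

/-- There is a chain of `n` `R`-classes of `S`, each of which is contained in `C`. -/
def HasRChainInside [Semigroup S] (C : Set S) (n : ℕ) : Prop :=
  ∃ f : Fin n → S, (∀ i, ∀ x : S, REquiv Set.univ x (f i) → x ∈ C) ∧
    ∀ i j : Fin n, i < j → RLt (Set.univ : Set S) (f i) (f j)

/-- The `R`-height of the subsemigroup `B`: the supremum of the lengths
(cardinalities) of chains of `R_B`-classes. -/
noncomputable def RHeight [Semigroup S] (B : Set S) : ℕ∞ :=
  sSup ((fun n : ℕ => (n : ℕ∞)) '' {n : ℕ | HasRChain B B n})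

/-- A bi-ideal of `S`: a nonempty subset `B` with `BS¹B ⊆ B`. -/
def IsBiIdeal [Semigroup S] (B : Set S) : Prop :=
  B.Nonempty ∧ ∀ b ∈ B, ∀ c ∈ B, b * c ∈ B ∧ ∀ s : S, b * s * c ∈ B

/-- A right ideal of `S`: a nonempty subset `A` with `AS ⊆ A`. -/
def IsRightIdeal [Semigroup S] (A : Set S) : Prop :=
  A.Nonempty ∧ ∀ a ∈ A, ∀ s : S, a * s ∈ A

/-- A left ideal of `S`: a nonempty subset `A` with `SA ⊆ A`. -/
def IsLeftIdeal [Semigroup S] (A : Set S) : Prop :=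
  A.Nonempty ∧ ∀ a ∈ A, ∀ s : S, s * a ∈ A

/-- A two-sided ideal of `S`. -/
def IsTwoSidedIdealSet [Semigroup S] (A : Set S) : Prop :=
  IsRightIdeal A ∧ IsLeftIdeal A

/-- `K` is the kernel (minimum two-sided ideal) of `S`. -/
def IsKernel [Semigroup S] (K : Set S) : Prop :=
  IsTwoSidedIdealSet K ∧ ∀ A : Set S, IsTwoSidedIdealSet A → K ⊆ A

/-- A right ideal of the subsemigroup `K` of `S`. -/
def IsRightIdealIn [Semigroup S] (K A : Set S) : Prop :=
  A.Nonempty ∧ A ⊆ K ∧ ∀ a ∈ A, ∀ k ∈ K, a * k ∈ A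

/-- A left ideal of the subsemigroup `K` of `S`. -/
def IsLeftIdealIn [Semigroup S] (K A : Set S) : Prop :=
  A.Nonempty ∧ A ⊆ K ∧ ∀ a ∈ A, ∀ k ∈ K, k * a ∈ A

/-- A two-sided ideal of the subsemigroup `K` of `S`. -/
def IsIdealIn [Semigroup S] (K A : Set S) : Prop :=
  IsRightIdealIn K A ∧ IsLeftIdealIn K A

/-- The subsemigroup `K` of `S` is completely simple: it is simple (has no
proper two-sided ideals) and possesses both a minimal right ideal and a
minimal left ideal. -/
def IsCompletelySimple [Semigroup S] (K : Set S) : Prop :=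
  K.Nonempty ∧ (∀ a ∈ K, ∀ b ∈ K, a * b ∈ K) ∧
  (∀ A : Set S, IsIdealIn K A → A = K) ∧
  (∃ A : Set S, IsRightIdealIn K A ∧ ∀ A' : Set S, IsRightIdealIn K A' → A' ⊆ A → A' = A) ∧
  (∃ A : Set S, IsLeftIdealIn K A ∧ ∀ A' : Set S, IsLeftIdealIn K A' → A' ⊆ A → A' = A)

section Aux

variable [Semigroup S]

private lemma rle_mono {A : Set S} {x y : S} (h : RLe A x y) : RLe (Set.univ : Set S) x y := by
  rcases h with h | ⟨s, _, h⟩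
  · exact Or.inl h
  · exact Or.inr ⟨s, trivial, h⟩

private lemma rle_univ_trans {x y z : S} (h1 : RLe (Set.univ : Set S) x y)
    (h2 : RLe (Set.univ : Set S) y z) : RLe (Set.univ : Set S) x z := by
  rcases h1 with rfl | ⟨s, _, rfl⟩
  · exact h2
  · rcases h2 with rfl | ⟨t, _, rfl⟩
    · exact Or.inr ⟨s, trivial, rfl⟩
    · exact Or.inr ⟨t * s, trivial, mul_assoc _ _ _⟩

private lemma rlt_univ_trans {x y z : S} (h1 : RLt (Set.univ : Set S) x y)
    (h2 : RLt (Set.univ : Set S) y z) : RLt (Set.univ : Set S) x z :=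
  ⟨rle_univ_trans h1.1 h2.1, fun h => h2.2 (rle_univ_trans h h1.1)⟩

/-- Three-lemma: two strict `R_A` steps give a strict `R_S` step. -/
private lemma rlt_univ_of_two_steps {A : Set S} (hA : IsRightIdeal A) {x y z : S}
    (hxy : RLt A x y) (hyz : RLt A y z) : RLt (Set.univ : Set S) x z := by
  refine ⟨rle_univ_trans (rle_mono hxy.1) (rle_mono hyz.1), ?_⟩
  intro hzx
  -- from strictness, x ≠ y, so x = y * u with u ∈ A
  rcases hxy.1 with rfl | ⟨u, huA, hxu⟩
  · exact hxy.2 (Or.inl rfl)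
  · rcases hzx with rfl | ⟨t, _, hzt⟩
    · exact hyz.2 (Or.inr ⟨u, huA, hxu⟩)
    · exact hyz.2 (Or.inr ⟨u * t, hA.2 u huA t, by rw [hzt, hxu, mul_assoc]⟩)

/-- Bottom lemma: if `x <_A y` but `y ≤_S x`, then `x * a <_S x` strictly for `a ∈ A`. -/
private lemma rlt_univ_mul_of_pair {A : Set S} (hA : IsRightIdeal A) {x y a : S}
    (hxy : RLt A x y) (hyx : RLe (Set.univ : Set S) y x) (ha : a ∈ A) :
    RLt (Set.univ : Set S) (x * a) x := by
  refine ⟨Or.inr ⟨a, trivial, rfl⟩, ?_⟩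
  intro hx
  -- obtain b ∈ A with x = x * b
  have hb : ∃ b ∈ A, x = x * b := by
    rcases hx with hx | ⟨v, _, hv⟩
    · exact ⟨a, ha, hx⟩
    · exact ⟨a * v, hA.2 a ha v, by rw [← mul_assoc]; exact hv⟩
  obtain ⟨b, hbA, hxb⟩ := hb
  rcases hyx with rfl | ⟨t, _, ht⟩
  · exact hxy.2 (Or.inl rfl)
  · exact hxy.2 (Or.inr ⟨b * t, hA.2 b hbA t, by rw [← mul_assoc, ← hxb]; exact ht⟩)

/-- From an `R_A`-chain of length `n` we get an `R_S`-chain of length `n/2 + 1`. -/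
private lemma key_chain {A : Set S} (hA : IsRightIdeal A) {n : ℕ}
    (h : HasRChain A A n) :
    HasRChain (Set.univ : Set S) (Set.univ : Set S) (n / 2 + 1) := by
  obtain ⟨a₀, ha₀⟩ := hA.1
  obtain ⟨f, hfA, hf⟩ := h
  set F : ℕ → S := fun i => if h : i < n then f ⟨i, h⟩ else a₀ with hF
  have hFc : ∀ i j : ℕ, i < j → j < n → RLt A (F i) (F j) := by
    intro i j hij hj
    have hi : i < n := lt_trans hij hj
    simpa [hF, dif_pos hi, dif_pos hj] using hf ⟨i, hi⟩ ⟨j, hj⟩ (by exact hij)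
  have hgap : ∀ p q : ℕ, p + 2 ≤ q → q < n → RLt (Set.univ : Set S) (F p) (F q) := by
    intro p q hpq hq
    exact rlt_univ_of_two_steps hA (hFc p (p + 1) (by omega) (by omega))
      (hFc (p + 1) q (by omega) hq)
  rcases Nat.eq_zero_or_pos n with rfl | hn
  · exact ⟨fun _ => a₀, fun _ => trivial, fun i j hij => by omega⟩
  rcases Nat.even_or_odd n with he | ho
  · -- n even, n ≥ 2
    have hn2 : 2 ≤ n := by rcases he with ⟨k, hk⟩; omega
    by_cases h10 : RLe (Set.univ : Set S) (F 1) (F 0)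
    · -- bottom pair R_S-equivalent: use F 0 * a₀, F 0, F 2, F 4, ...
      have hbot : RLt (Set.univ : Set S) (F 0 * a₀) (F 0) :=
        rlt_univ_mul_of_pair hA (hFc 0 1 one_pos (by omega)) h10 ha₀
      refine ⟨fun j => if j.val = 0 then F 0 * a₀ else F (2 * (j.val - 1)),
        fun _ => trivial, ?_⟩
      intro i j hij
      have hjn : j.val ≤ n / 2 := by omega
      have hji : (i : ℕ) < (j : ℕ) := hij
      by_cases hi0 : i.val = 0
      · simp only [hi0, if_pos rfl, if_neg (by omega : ¬ j.val = 0)]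
        rcases Nat.lt_or_ge j.val 2 with hj2 | hj2
        · have : j.val = 1 := by omega
          rw [this]
          simpa using hbot
        · refine rlt_univ_trans hbot (hgap 0 (2 * (j.val - 1)) (by omega) ?_)
          rcases he with ⟨k, hk⟩; omega
      · simp only [if_neg hi0, if_neg (by omega : ¬ j.val = 0)]
        refine hgap (2 * (i.val - 1)) (2 * (j.val - 1)) (by omega) ?_
        rcases he with ⟨k, hk⟩; omega
    · -- bottom pair strict in S: use F 0, F 1, F 3, F 5, ...
      refine ⟨fun j => if j.val = 0 then F 0 else F (2 * j.val - 1),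
        fun _ => trivial, ?_⟩
      intro i j hij
      have hjn : j.val ≤ n / 2 := by omega
      have hji : (i : ℕ) < (j : ℕ) := hij
      by_cases hi0 : i.val = 0
      · simp only [hi0, if_pos rfl, if_neg (by omega : ¬ j.val = 0)]
        rcases Nat.lt_or_ge j.val 2 with hj2 | hj2
        · have : j.val = 1 := by omega
          rw [this]
          exact ⟨rle_mono (hFc 0 1 one_pos (by omega)).1, by simpa using h10⟩
        · refine hgap 0 (2 * j.val - 1) (by omega) ?_
          rcases he with ⟨k, hk⟩; omega
      · simp only [if_neg hi0, if_neg (by omega : ¬ j.val = 0)]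
        refine hgap (2 * i.val - 1) (2 * j.val - 1) (by omega) ?_
        rcases he with ⟨k, hk⟩; omega
  · -- n odd: use F 0, F 2, F 4, ...
    refine ⟨fun j => F (2 * j.val), fun _ => trivial, ?_⟩
    intro i j hij
    have hjn : j.val ≤ n / 2 := by omega
    have hji : (i : ℕ) < (j : ℕ) := hij
    refine hgap (2 * i.val) (2 * j.val) (by omega) ?_
    rcases ho with ⟨k, hk⟩; omega

end Aux

/-- If `S` has finite `R`-height and `A` is a right ideal of `S`,
then `H_R(A) ≤ 2·H_R(S) - 1`. -/
theorem rightideal_rheight_le_two_mul_sub_one {S : Type*} [Semigroup S]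
    (hfin : RHeight (Set.univ : Set S) ≠ ⊤)
    {A : Set S} (hA : IsRightIdeal A) :
    RHeight A ≤ 2 * RHeight (Set.univ : Set S) - 1 := by
  obtain ⟨h, hh⟩ := WithTop.ne_top_iff_exists.mp hfin
  apply sSup_le
  rintro x ⟨n, hn, rfl⟩
  have hc := key_chain hA hn
  have hmem : ((n / 2 + 1 : ℕ) : ℕ∞) ≤ RHeight (Set.univ : Set S) :=
    le_sSup ⟨n / 2 + 1, hc, rfl⟩
  rw [← hh] at hmem ⊢
  have hle : n / 2 + 1 ≤ h := ENat.coe_le_coe.mp hmem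
  have h2 : ((n : ℕ) : ℕ∞) ≤ ((2 * h - 1 : ℕ) : ℕ∞) := ENat.coe_le_coe.mpr (by omega)
  calc ((n : ℕ) : ℕ∞) ≤ ((2 * h - 1 : ℕ) : ℕ∞) := h2
    _ = 2 * (h : ℕ∞) - 1 := by rw [ENat.coe_sub]; push_cast; rfl
end

section
/- Let S be a semigroup with finite R-height whose kernel is completely simple, and let A be a left ideal of S. Then H_R(A) ≤ 2·H_R(S) − 1. -/
/-!
Common definitions: Green's preorder/relation computed inside a subsemigroup,
chains of R-classes, R-height, bi-ideals, one- and two-sided ideals,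
the kernel, and completely simple (sub)semigroups.
-/

variable {S : Type*}

section Aux

variable {S : Type*} [Semigroup S]

private lemma rle_trans' {B : Set S} (hB : ∀ x ∈ B, ∀ y ∈ B, x * y ∈ B) {a b c : S}
    (h1 : RLe B a b) (h2 : RLe B b c) : RLe B a c := by
  rcases h1 with rfl | ⟨s, hs, rfl⟩
  · exact h2
  · rcases h2 with rfl | ⟨t, ht, rfl⟩
    · exact Or.inr ⟨s, hs, rfl⟩
    · exact Or.inr ⟨t * s, hB t ht s hs, mul_assoc _ _ _⟩

private lemma univ_closed : ∀ x ∈ (Set.univ : Set S), ∀ y ∈ (Set.univ : Set S),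
    x * y ∈ (Set.univ : Set S) := fun _ _ _ _ => Set.mem_univ _

private lemma rle_univ {B : Set S} {a b : S} (h : RLe B a b) :
    RLe (Set.univ : Set S) a b := by
  rcases h with rfl | ⟨s, _, rfl⟩
  · exact Or.inl rfl
  · exact Or.inr ⟨s, Set.mem_univ _, rfl⟩

/-- No three chained elements of a left ideal can sit inside one `R_S`-class. -/
private lemma no_three {A : Set S} (hA : IsLeftIdeal A) {a b c : S}
    (h1 : RLt A a b) (h2 : RLt A b c)
    (hba : RLe (Set.univ : Set S) b a) (hcb : RLe (Set.univ : Set S) c b) : False := by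
  rcases hba with e | ⟨v, -, hv⟩
  · exact h1.2 (Or.inl e)
  · rcases hcb with e | ⟨u, -, hu⟩
    · exact h2.2 (Or.inl e)
    · rcases h2.1 with e | ⟨t, ht, hbt⟩
      · exact h2.2 (Or.inl e.symm)
      · apply h1.2
        refine Or.inr ⟨v * (u * t), hA.2 _ (hA.2 _ ht u) v, ?_⟩
        have hb : b = b * (u * t) := by rw [← mul_assoc, ← hu, ← hbt]
        calc b = b * (u * t) := hb
          _ = (a * v) * (u * t) := by rw [← hv]
          _ = a * (v * (u * t)) := mul_assoc _ _ _

private lemma exists_minright {K : Set S} (hCS : IsCompletelySimple K) :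
    ∀ a ∈ K, ∃ R : Set S, a ∈ R ∧ IsRightIdealIn K R ∧
      ∀ R', IsRightIdealIn K R' → R' ⊆ R → R' = R := by
  obtain ⟨hKne, hKmul, hsimp, ⟨R₀, hR₀, hR₀min⟩, -⟩ := hCS
  have htrans : ∀ s ∈ K, IsRightIdealIn K {x | ∃ r ∈ R₀, x = s * r} ∧
      ∀ R', IsRightIdealIn K R' → R' ⊆ {x | ∃ r ∈ R₀, x = s * r} →
        R' = {x | ∃ r ∈ R₀, x = s * r} := by
    intro s hs
    obtain ⟨⟨r0, hr0⟩, hR₀K, hR₀r⟩ := hR₀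
    constructor
    · refine ⟨⟨s * r0, r0, hr0, rfl⟩, ?_, ?_⟩
      · rintro x ⟨r, hr, rfl⟩; exact hKmul s hs r (hR₀K hr)
      · rintro x ⟨r, hr, rfl⟩ k hk; exact ⟨r * k, hR₀r r hr k hk, mul_assoc _ _ _⟩
    · intro R' hR' hsub
      have hR'' : IsRightIdealIn K {x | x ∈ R₀ ∧ s * x ∈ R'} := by
        obtain ⟨⟨y, hy⟩, hR'K, hR'r⟩ := hR'
        obtain ⟨r, hr, rfl⟩ := hsub hy
        exact ⟨⟨r, hr, hy⟩, fun x hx => hR₀K hx.1,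
          fun x hx k hk => ⟨hR₀r x hx.1 k hk, by rw [← mul_assoc]; exact hR'r _ hx.2 k hk⟩⟩
      have heq := hR₀min _ hR'' (fun x hx => hx.1)
      apply Set.Subset.antisymm hsub
      rintro x ⟨r, hr, rfl⟩
      have hmem : r ∈ {x | x ∈ R₀ ∧ s * x ∈ R'} := by rw [heq]; exact hr
      exact hmem.2
  intro a ha
  have hT : IsIdealIn K (R₀ ∪ {x | ∃ k ∈ K, ∃ r ∈ R₀, x = k * r}) := by
    obtain ⟨⟨r0, hr0⟩, hR₀K, hR₀r⟩ := hR₀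
    constructor
    · refine ⟨⟨r0, Or.inl hr0⟩, ?_, ?_⟩
      · rintro x (hx | ⟨k, hk, r, hr, rfl⟩)
        · exact hR₀K hx
        · exact hKmul k hk r (hR₀K hr)
      · rintro x (hx | ⟨k, hk, r, hr, rfl⟩) k' hk'
        · exact Or.inl (hR₀r x hx k' hk')
        · exact Or.inr ⟨k, hk, r * k', hR₀r r hr k' hk', mul_assoc _ _ _⟩
    · refine ⟨⟨r0, Or.inl hr0⟩, ?_, ?_⟩
      · rintro x (hx | ⟨k, hk, r, hr, rfl⟩)
        · exact hR₀K hx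
        · exact hKmul k hk r (hR₀K hr)
      · rintro x (hx | ⟨k, hk, r, hr, rfl⟩) k' hk'
        · exact Or.inr ⟨k', hk', x, hx, rfl⟩
        · exact Or.inr ⟨k' * k, hKmul k' hk' k hk, r, hr, (mul_assoc _ _ _).symm⟩
  have hTK := hsimp _ hT
  have haT : a ∈ R₀ ∪ {x | ∃ k ∈ K, ∃ r ∈ R₀, x = k * r} := by rw [hTK]; exact ha
  rcases haT with h | ⟨k, hk, r, hr, rfl⟩
  · exact ⟨R₀, h, hR₀, hR₀min⟩
  · obtain ⟨hi, hmin⟩ := htrans k hk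
    exact ⟨{x | ∃ r' ∈ R₀, x = k * r'}, ⟨r, hr, rfl⟩, hi, hmin⟩

private lemma exists_minleft {K : Set S} (hCS : IsCompletelySimple K) :
    ∀ a ∈ K, ∃ L : Set S, a ∈ L ∧ IsLeftIdealIn K L ∧
      ∀ L', IsLeftIdealIn K L' → L' ⊆ L → L' = L := by
  obtain ⟨hKne, hKmul, hsimp, -, ⟨L₀, hL₀, hL₀min⟩⟩ := hCS
  have htrans : ∀ s ∈ K, IsLeftIdealIn K {x | ∃ l ∈ L₀, x = l * s} ∧
      ∀ L', IsLeftIdealIn K L' → L' ⊆ {x | ∃ l ∈ L₀, x = l * s} →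
        L' = {x | ∃ l ∈ L₀, x = l * s} := by
    intro s hs
    obtain ⟨⟨l0, hl0⟩, hL₀K, hL₀l⟩ := hL₀
    constructor
    · refine ⟨⟨l0 * s, l0, hl0, rfl⟩, ?_, ?_⟩
      · rintro x ⟨l, hl, rfl⟩; exact hKmul l (hL₀K hl) s hs
      · rintro x ⟨l, hl, rfl⟩ k hk; exact ⟨k * l, hL₀l l hl k hk, (mul_assoc _ _ _).symm⟩
    · intro L' hL' hsub
      have hL'' : IsLeftIdealIn K {x | x ∈ L₀ ∧ x * s ∈ L'} := by
        obtain ⟨⟨y, hy⟩, hL'K, hL'l⟩ := hL'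
        obtain ⟨l, hl, rfl⟩ := hsub hy
        exact ⟨⟨l, hl, hy⟩, fun x hx => hL₀K hx.1,
          fun x hx k hk => ⟨hL₀l x hx.1 k hk, by rw [mul_assoc]; exact hL'l _ hx.2 k hk⟩⟩
      have heq := hL₀min _ hL'' (fun x hx => hx.1)
      apply Set.Subset.antisymm hsub
      rintro x ⟨l, hl, rfl⟩
      have hmem : l ∈ {x | x ∈ L₀ ∧ x * s ∈ L'} := by rw [heq]; exact hl
      exact hmem.2
  intro a ha
  have hT : IsIdealIn K (L₀ ∪ {x | ∃ k ∈ K, ∃ l ∈ L₀, x = l * k}) := by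
    obtain ⟨⟨l0, hl0⟩, hL₀K, hL₀l⟩ := hL₀
    constructor
    · refine ⟨⟨l0, Or.inl hl0⟩, ?_, ?_⟩
      · rintro x (hx | ⟨k, hk, l, hl, rfl⟩)
        · exact hL₀K hx
        · exact hKmul l (hL₀K hl) k hk
      · rintro x (hx | ⟨k, hk, l, hl, rfl⟩) k' hk'
        · exact Or.inr ⟨k', hk', x, hx, rfl⟩
        · exact Or.inr ⟨k * k', hKmul k hk k' hk', l, hl, mul_assoc _ _ _⟩
    · refine ⟨⟨l0, Or.inl hl0⟩, ?_, ?_⟩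
      · rintro x (hx | ⟨k, hk, l, hl, rfl⟩)
        · exact hL₀K hx
        · exact hKmul l (hL₀K hl) k hk
      · rintro x (hx | ⟨k, hk, l, hl, rfl⟩) k' hk'
        · exact Or.inl (hL₀l x hx k' hk')
        · exact Or.inr ⟨k, hk, k' * l, hL₀l l hl k' hk', (mul_assoc _ _ _).symm⟩
  have hTK := hsimp _ hT
  have haT : a ∈ L₀ ∪ {x | ∃ k ∈ K, ∃ l ∈ L₀, x = l * k} := by rw [hTK]; exact ha
  rcases haT with h | ⟨k, hk, l, hl, rfl⟩
  · exact ⟨L₀, h, hL₀, hL₀min⟩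
  · obtain ⟨hi, hmin⟩ := htrans k hk
    exact ⟨{x | ∃ l' ∈ L₀, x = l' * k}, ⟨l, hl, rfl⟩, hi, hmin⟩
private lemma aK_minimal {K : Set S} (hCS : IsCompletelySimple K) {a : S} (ha : a ∈ K) :
    a ∈ {x | ∃ k ∈ K, x = a * k} ∧ IsRightIdealIn K {x | ∃ k ∈ K, x = a * k} ∧
      ∀ R', IsRightIdealIn K R' → R' ⊆ {x | ∃ k ∈ K, x = a * k} →
        R' = {x | ∃ k ∈ K, x = a * k} := by
  obtain ⟨R, haR, hRi, hRmin⟩ := exists_minright hCS a ha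
  have hKmul := hCS.2.1
  have hi : IsRightIdealIn K {x | ∃ k ∈ K, x = a * k} := by
    refine ⟨⟨a * a, a, ha, rfl⟩, ?_, ?_⟩
    · rintro x ⟨k, hk, rfl⟩; exact hKmul a ha k hk
    · rintro x ⟨k, hk, rfl⟩ k' hk'; exact ⟨k * k', hKmul k hk k' hk', mul_assoc _ _ _⟩
  have hsub : {x | ∃ k ∈ K, x = a * k} ⊆ R := by
    rintro x ⟨k, hk, rfl⟩; exact hRi.2.2 a haR k hk
  have heq := hRmin _ hi hsub
  refine ⟨?_, hi, ?_⟩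
  · rw [heq]; exact haR
  · rw [heq]; exact hRmin

private lemma Ka_minimal {K : Set S} (hCS : IsCompletelySimple K) {a : S} (ha : a ∈ K) :
    a ∈ {x | ∃ k ∈ K, x = k * a} ∧ IsLeftIdealIn K {x | ∃ k ∈ K, x = k * a} ∧
      ∀ L', IsLeftIdealIn K L' → L' ⊆ {x | ∃ k ∈ K, x = k * a} →
        L' = {x | ∃ k ∈ K, x = k * a} := by
  obtain ⟨L, haL, hLi, hLmin⟩ := exists_minleft hCS a ha
  have hKmul := hCS.2.1
  have hi : IsLeftIdealIn K {x | ∃ k ∈ K, x = k * a} := by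
    refine ⟨⟨a * a, a, ha, rfl⟩, ?_, ?_⟩
    · rintro x ⟨k, hk, rfl⟩; exact hKmul k hk a ha
    · rintro x ⟨k, hk, rfl⟩ k' hk'; exact ⟨k' * k, hKmul k' hk' k hk, (mul_assoc _ _ _).symm⟩
  have hsub : {x | ∃ k ∈ K, x = k * a} ⊆ L := by
    rintro x ⟨k, hk, rfl⟩; exact hLi.2.2 a haL k hk
  have heq := hLmin _ hi hsub
  refine ⟨?_, hi, ?_⟩
  · rw [heq]; exact haL
  · rw [heq]; exact hLmin

private lemma mem_right_swap {K : Set S} (hCS : IsCompletelySimple K) {a b : S}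
    (ha : a ∈ K) (hb : b ∈ K) (h : ∃ k ∈ K, a = b * k) : ∃ k ∈ K, b = a * k := by
  obtain ⟨haK, hai, -⟩ := aK_minimal hCS ha
  obtain ⟨hbK, -, hbmin⟩ := aK_minimal hCS hb
  obtain ⟨k0, hk0, hab⟩ := h
  have hsub : {x | ∃ k ∈ K, x = a * k} ⊆ {x | ∃ k ∈ K, x = b * k} := by
    rintro x ⟨k, hk, rfl⟩
    exact ⟨k0 * k, hCS.2.1 k0 hk0 k hk, by rw [hab, mul_assoc]⟩
  have heq := hbmin _ hai hsub
  have hb' : b ∈ {x | ∃ k ∈ K, x = a * k} := by rw [heq]; exact hbK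
  exact hb'

private lemma mem_left_swap {K : Set S} (hCS : IsCompletelySimple K) {a b : S}
    (ha : a ∈ K) (hb : b ∈ K) (h : ∃ k ∈ K, a = k * b) : ∃ k ∈ K, b = k * a := by
  obtain ⟨haK, hai, -⟩ := Ka_minimal hCS ha
  obtain ⟨hbK, -, hbmin⟩ := Ka_minimal hCS hb
  obtain ⟨k0, hk0, hab⟩ := h
  have hsub : {x | ∃ k ∈ K, x = k * a} ⊆ {x | ∃ k ∈ K, x = k * b} := by
    rintro x ⟨k, hk, rfl⟩
    exact ⟨k * k0, hCS.2.1 k hk k0 hk0, by rw [hab, mul_assoc]⟩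
  have heq := hbmin _ hai hsub
  have hb' : b ∈ {x | ∃ k ∈ K, x = k * a} := by rw [heq]; exact hbK
  exact hb'

private lemma regular_K {K : Set S} (hCS : IsCompletelySimple K) {a : S} (ha : a ∈ K) :
    ∃ w ∈ K, (a * w) * a = a := by
  have ha2 : a * a ∈ K := hCS.2.1 a ha a ha
  obtain ⟨v, hv, hav⟩ := mem_right_swap hCS ha2 ha ⟨a, ha, rfl⟩
  obtain ⟨w, hw, haw⟩ := mem_left_swap hCS ha2 ha ⟨a, ha, rfl⟩
  refine ⟨w, hw, ?_⟩
  have hwa : w * a = a * v := by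
    calc w * a = w * ((a * a) * v) := by rw [← hav]
      _ = (w * (a * a)) * v := (mul_assoc _ _ _).symm
      _ = a * v := by rw [← haw]
  calc (a * w) * a = a * (w * a) := mul_assoc _ _ _
    _ = a * (a * v) := by rw [hwa]
    _ = (a * a) * v := (mul_assoc _ _ _).symm
    _ = a := hav.symm

private lemma no_two_kernel {K A : Set S} (hCS : IsCompletelySimple K) (hA : IsLeftIdeal A)
    {a b : S} (hbA : b ∈ A) (ha : a ∈ K) (hb : b ∈ K) (h : RLt A a b) : False := by
  rcases h.1 with e | ⟨s, hs, has⟩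
  · exact h.2 (Or.inl e.symm)
  · obtain ⟨w, hw, hreg⟩ := regular_K hCS hb
    have haK : ∃ k ∈ K, a = b * k := by
      refine ⟨w * a, hCS.2.1 w hw a ha, ?_⟩
      calc a = b * s := has
        _ = ((b * w) * b) * s := by rw [hreg]
        _ = (b * w) * (b * s) := mul_assoc _ _ _
        _ = (b * w) * a := by rw [← has]
        _ = b * (w * a) := mul_assoc _ _ _
    obtain ⟨k, hk, hbk⟩ := mem_right_swap hCS ha hb haK
    apply h.2
    refine Or.inr ⟨(k * w) * b, hA.2 b hbA (k * w), ?_⟩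
    calc b = (b * w) * b := hreg.symm
      _ = ((a * k) * w) * b := by rw [← hbk]
      _ = (a * (k * w)) * b := by rw [mul_assoc a k w]
      _ = a * ((k * w) * b) := mul_assoc _ _ _

private lemma mem_K_of_rle {K : Set S} (hK : IsKernel K) {a b : S} (hb : b ∈ K)
    (h : RLe (Set.univ : Set S) a b) : a ∈ K := by
  rcases h with rfl | ⟨s, -, rfl⟩
  · exact hb
  · exact hK.1.1.2 b hb s

private lemma kernel_drop {K : Set S} (hK : IsKernel K) {a : S} (ha : a ∉ K)
    {κ : S} (hκ : κ ∈ K) : RLt (Set.univ : Set S) (a * κ) a := by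
  refine ⟨Or.inr ⟨κ, Set.mem_univ _, rfl⟩, ?_⟩
  intro hle
  rcases hle with e | ⟨z, -, hz⟩
  · exact ha (e ▸ hK.1.2.2 κ hκ a)
  · exact ha (hz ▸ hK.1.1.2 _ (hK.1.2.2 κ hκ a) z)

private lemma rle_of_chain {L : ℕ} {u : ℕ → S}
    (hc : ∀ i, i + 1 < L → RLt (Set.univ : Set S) (u i) (u (i + 1))) :
    ∀ i j, i ≤ j → j < L → RLe (Set.univ : Set S) (u i) (u j) := by
  intro i j hij hjL
  induction j, hij using Nat.le_induction with
  | base => exact Or.inl rfl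
  | succ j hij ih =>
      exact rle_trans' univ_closed (ih (by omega)) (hc j hjL).1

private lemma rlt_of_chain {L : ℕ} {u : ℕ → S}
    (hc : ∀ i, i + 1 < L → RLt (Set.univ : Set S) (u i) (u (i + 1))) :
    ∀ i j, i < j → j < L → RLt (Set.univ : Set S) (u i) (u j) := by
  intro i j hij hjL
  refine ⟨rle_of_chain hc i j hij.le hjL, ?_⟩
  intro hji
  have h1 : RLe (Set.univ : Set S) (u (i + 1)) (u j) := rle_of_chain hc (i + 1) j hij hjL
  exact (hc i (by omega)).2 (rle_trans' univ_closed h1 hji)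
private lemma core {K A : Set S} (hK : IsKernel K) (hCS : IsCompletelySimple K)
    (hA : IsLeftIdeal A) {N : ℕ} (hN1 : 1 ≤ N)
    (hNmax : ∀ m, HasRChain (Set.univ : Set S) Set.univ m → m ≤ N)
    {m : ℕ} (hm : HasRChain A A m) : m ≤ 2 * N - 1 := by
  by_contra hcon
  have h2N : 2 * N ≤ m := by omega
  obtain ⟨f, hfA, hflt⟩ := hm
  have hm0 : 0 < m := by omega
  have hAclosed : ∀ x ∈ A, ∀ y ∈ A, x * y ∈ A := fun x _ y hy => hA.2 y hy x
  set u : ℕ → S := fun i => f ⟨i % m, Nat.mod_lt _ hm0⟩ with hu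
  have huA : ∀ i, u i ∈ A := fun i => hfA _
  have hult : ∀ i j, i < j → j < m → RLt A (u i) (u j) := by
    intro i j hij hj
    have hi : i < m := lt_trans hij hj
    exact hflt ⟨i % m, Nat.mod_lt _ hm0⟩ ⟨j % m, Nat.mod_lt _ hm0⟩
      (by simp [Fin.lt_def, Nat.mod_eq_of_lt hi, Nat.mod_eq_of_lt hj, hij])
  obtain ⟨κ, hκ⟩ := hCS.1
  -- the key step: no strict `RLe univ`-drop can be absent twice in a row
  have step : ∀ i, i + 2 < m →
      ¬ RLe (Set.univ : Set S) (u (i + 2)) (u i) := by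
    intro i hi hle
    have hab : RLt A (u i) (u (i + 1)) := hult _ _ (by omega) (by omega)
    have hbc : RLt A (u (i + 1)) (u (i + 2)) := hult _ _ (by omega) (by omega)
    exact no_three hA hab hbc
      (rle_trans' univ_closed (rle_univ hbc.1) hle)
      (rle_trans' univ_closed hle (rle_univ hab.1))
  by_cases h0K : u 0 ∈ K
  · -- chain : u 0, u 1, u 3, u 5, ..., u (2N-1)  (length N+1)
    set v : ℕ → S := fun j => if j = 0 then u 0 else u (2 * (j - 1) + 1) with hv
    have hv0 : v 0 = u 0 := by simp [hv]
    have hvs : ∀ i : ℕ, v (i + 1) = u (2 * i + 1) := by intro i; simp [hv]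
    have hvc : ∀ j, j + 1 < N + 1 → RLt (Set.univ : Set S) (v j) (v (j + 1)) := by
      intro j hj
      rcases Nat.eq_zero_or_pos j with rfl | hjpos
      · rw [hv0, hvs 0]
        have h01 : RLt A (u 0) (u (2 * 0 + 1)) := hult 0 1 one_pos (by omega)
        refine ⟨rle_univ h01.1, ?_⟩
        intro hle
        exact no_two_kernel hCS hA (huA (2 * 0 + 1)) h0K (mem_K_of_rle hK h0K hle) h01
      · obtain ⟨i, rfl⟩ : ∃ i, j = i + 1 := ⟨j - 1, by omega⟩
        have e1 : v (i + 1) = u (2 * i + 1) := hvs i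
        have e2 : v (i + 1 + 1) = u (2 * i + 1 + 2) := by
          rw [hvs]; congr 1
        rw [e1, e2]
        refine ⟨rle_univ (hult (2 * i + 1) (2 * i + 1 + 2) (by omega) (by omega)).1, ?_⟩
        exact step (2 * i + 1) (by omega)
    have hchain : HasRChain (Set.univ : Set S) Set.univ (N + 1) := by
      refine ⟨fun j => v j.val, fun _ => Set.mem_univ _, fun i j hij => ?_⟩
      exact rlt_of_chain hvc i.val j.val hij j.isLt
    have := hNmax _ hchain
    omega
  · -- chain : u 0 * κ, u 0, u 2, u 4, ..., u (2N-2)  (length N+1)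
    set v : ℕ → S := fun j => if j = 0 then u 0 * κ else u (2 * (j - 1)) with hv
    have hv0 : v 0 = u 0 * κ := by simp [hv]
    have hvs : ∀ i : ℕ, v (i + 1) = u (2 * i) := by intro i; simp [hv]
    have hvc : ∀ j, j + 1 < N + 1 → RLt (Set.univ : Set S) (v j) (v (j + 1)) := by
      intro j hj
      rcases Nat.eq_zero_or_pos j with rfl | hjpos
      · rw [hv0, hvs 0]
        have : u (2 * 0) = u 0 := by norm_num
        rw [this]
        exact kernel_drop hK h0K hκ
      · obtain ⟨i, rfl⟩ : ∃ i, j = i + 1 := ⟨j - 1, by omega⟩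
        have e1 : v (i + 1) = u (2 * i) := hvs i
        have e2 : v (i + 1 + 1) = u (2 * i + 2) := by
          rw [hvs]; congr 1
        rw [e1, e2]
        refine ⟨rle_univ (hult (2 * i) (2 * i + 2) (by omega) (by omega)).1, ?_⟩
        exact step (2 * i) (by omega)
    have hchain : HasRChain (Set.univ : Set S) Set.univ (N + 1) := by
      refine ⟨fun j => v j.val, fun _ => Set.mem_univ _, fun i j hij => ?_⟩
      exact rlt_of_chain hvc i.val j.val hij j.isLt
    have := hNmax _ hchain
    omega

end Aux

/-- If `S` has finite `R`-height and completely simple kernel, and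
`A` is a left ideal of `S`, then `H_R(A) ≤ 2·H_R(S) - 1`. -/
theorem leftideal_rheight_le_two_mul_sub_one {S : Type*} [Semigroup S]
    (hfin : RHeight (Set.univ : Set S) ≠ ⊤)
    {K : Set S} (hK : IsKernel K) (hCS : IsCompletelySimple K)
    {A : Set S} (hA : IsLeftIdeal A) :
    RHeight A ≤ 2 * RHeight (Set.univ : Set S) - 1 := by
  classical
  obtain ⟨κ, hκ⟩ := hCS.1
  have h1 : HasRChain (Set.univ : Set S) Set.univ 1 := by
    refine ⟨fun _ => κ, fun _ => Set.mem_univ _, fun i j hij => ?_⟩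
    have hi := i.isLt
    have hj := j.isLt
    rw [Fin.lt_def] at hij
    omega
  have hbdd : BddAbove {m | HasRChain (Set.univ : Set S) Set.univ m} := by
    by_contra hnb
    apply hfin
    have hall : ∀ n : ℕ, (n : ℕ∞) ≤ RHeight (Set.univ : Set S) := by
      intro n
      rw [not_bddAbove_iff] at hnb
      obtain ⟨y, hy, hny⟩ := hnb n
      calc (n : ℕ∞) ≤ (y : ℕ∞) := by exact_mod_cast hny.le
        _ ≤ _ := by rw [RHeight]; exact le_sSup ⟨y, hy, rfl⟩
    rcases eq_or_ne (RHeight (Set.univ : Set S)) ⊤ with h | h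
    · exact h
    · lift RHeight (Set.univ : Set S) to ℕ using h with n hn
      have := hall (n + 1)
      have h2 : n + 1 ≤ n := by exact_mod_cast this
      omega
  set Nn := sSup {m | HasRChain (Set.univ : Set S) Set.univ m} with hNn
  have hne : ({m | HasRChain (Set.univ : Set S) Set.univ m}).Nonempty := ⟨1, h1⟩
  have hNmem : HasRChain (Set.univ : Set S) Set.univ Nn := Nat.sSup_mem hne hbdd
  have hNmax : ∀ m, HasRChain (Set.univ : Set S) Set.univ m → m ≤ Nn :=
    fun m hm => le_csSup hbdd hm
  have hN1 : 1 ≤ Nn := le_csSup hbdd h1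
  have hNle : (Nn : ℕ∞) ≤ RHeight (Set.univ : Set S) := by
    rw [RHeight]; exact le_sSup ⟨Nn, hNmem, rfl⟩
  rw [RHeight]
  apply sSup_le
  rintro x ⟨m, hm, rfl⟩
  have hle : m ≤ 2 * Nn - 1 := core hK hCS hA hN1 hNmax hm
  calc (m : ℕ∞) ≤ ((2 * Nn - 1 : ℕ) : ℕ∞) := by exact_mod_cast hle
    _ = 2 * (Nn : ℕ∞) - 1 := by
        rw [ENat.coe_sub, Nat.cast_mul, Nat.cast_ofNat, Nat.cast_one]
    _ ≤ 2 * RHeight (Set.univ : Set S) - 1 :=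
        tsub_le_tsub_right (mul_le_mul_right hNle 2) 1
end
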